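/- arXiv:1711.10649 — 2 statements merged into one kernel-verified Lean document; each statement's English description precedes it below -/
import Mathlib

section
/- Let N = nk and let X_1, …, X_N be an i.i.d. sequence of real random variables under the sublinear expectation 𝔼, with 𝔼[X_1²] < ∞, μ̄ := 𝔼[X_1], μ_ := −𝔼[−X_1], and σ̄² := sup_{θ∈Θ} E_θ[(X_1 − E_θ[X_1])²]. Arrange the data in k rows of length n and define the row averages Y_j := (1/n) Σ_{i=1}^n X_{(j−1)n+i} for 1 ≤ j ≤ k, and the estimators μ̂̄ := max_{1≤j≤k} Y_j and μ̂_ := min_{1≤j≤k} Y_j. Then 𝔼[((μ̂̄ − μ̄)⁺)²] ≤ Ck/n and 𝔼[((μ̂_ − μ_)⁻)²] ≤ Ck/n, where C := 2(σ̄² + (μ̄ − μ_)²), a⁺ := max(a,0) and a⁻ := max(−a,0). -/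
/-!
Fix a row and set `ξᵢ = (Xᵢ - μ̄) / n`. Every `P_θ` has `E_θ ξ₀ ≤ 0` and
`E_θ ξ₀² ≤ D / n²` with `D = σ̄² + (μ̄ - μ_)²`, since `E_θ X₀ ∈ [μ_, μ̄]`. As
`((s + δ)⁺)² ≤ (s⁺)² + 2 s⁺ δ + δ²`, adding a centred increment to `s` raises the expected squared
positive part by at most `D / n²`; independence under `𝔼` lets one freeze the partial sum of the
earlier terms, so `𝔼[((ξ₁ + ⋯ + ξₙ)⁺)²] ≤ D / n`. The squared positive part of the maximum of the
`k` rows is at most the sum over the rows, which gives `k D / n`, half the claimed bound. The lower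
estimate is the same argument applied to `μ_ - Xᵢ`.
-/

open MeasureTheory ProbabilityTheory Filter Finset

/-- The sublinear expectation `𝔼[f] = sup_θ E_θ[f]` associated with a family of measures. -/
noncomputable def SE {Ω Θ : Type*} [MeasurableSpace Ω] (P : Θ → Measure Ω) (f : Ω → ℝ) : ℝ :=
  ⨆ θ, ∫ ω, f ω ∂(P θ)

/-- `X` and `Y` are identically distributed under the sublinear expectation. -/
def SEIdentDistrib {Ω Θ : Type*} [MeasurableSpace Ω] (P : Θ → Measure Ω) (X Y : Ω → ℝ) : Prop :=
  ∀ φ : ℝ → ℝ, Continuous φ → (∃ C, ∀ x, |φ x| ≤ C) →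
    SE P (fun ω => φ (X ω)) = SE P (fun ω => φ (Y ω))

/-- `Y` is independent of the random vector `X` under the sublinear expectation. -/
def SEIndepOf {Ω Θ : Type*} [MeasurableSpace Ω] (P : Θ → Measure Ω) {m : ℕ}
    (Y : Ω → ℝ) (X : Ω → Fin m → ℝ) : Prop :=
  ∀ φ : (Fin m → ℝ) → ℝ → ℝ,
    Continuous (fun p : (Fin m → ℝ) × ℝ => φ p.1 p.2) →
    (∃ C, ∀ x y, |φ x y| ≤ C) →
    SE P (fun ω => φ (X ω) (Y ω)) = SE P (fun ω => SE P (fun ω' => φ (X ω) (Y ω')))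

section MeasureTheory

variable {Ω : Type*} [MeasurableSpace Ω] {μ : Measure Ω}

theorem integral_le_of_forall_integral_min_le [IsFiniteMeasure μ] {F : Ω → ℝ}
    (hF : Integrable F μ) {B : ℝ} (hB : ∀ M : ℕ, ∫ ω, min (F ω) M ∂μ ≤ B) :
    ∫ ω, F ω ∂μ ≤ B := by
  refine le_of_tendsto' (integral_tendsto_of_tendsto_of_monotone
    (fun M => hF.inf (integrable_const _)) hF
    (ae_of_all _ fun ω M M' hMM' => min_le_min le_rfl (Nat.cast_le.2 hMM'))
    (ae_of_all _ fun ω => tendsto_const_nhds.congr' ?_)) hB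
  filter_upwards [eventually_ge_atTop ⌈F ω⌉₊] with M hM
  exact (min_eq_left ((Nat.le_ceil _).trans (Nat.cast_le.2 hM))).symm

theorem integrable_sq_max_zero [IsFiniteMeasure μ] {f : Ω → ℝ} (hf : MemLp f 2 μ) :
    Integrable (fun ω => max (f ω) 0 ^ 2) μ :=
  (hf.sup (memLp_const 0)).integrable_sq

theorem integral_sub_sq_eq_add [IsProbabilityMeasure μ] {X : Ω → ℝ} (hX : MemLp X 2 μ) (t : ℝ) :
    ∫ ω, (X ω - t) ^ 2 ∂μ = ∫ ω, (X ω - ∫ ω', X ω' ∂μ) ^ 2 ∂μ + (∫ ω, X ω ∂μ - t) ^ 2 := by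
  have hvar (t : ℝ) : ∫ ω, (X ω - t) ^ 2 ∂μ = variance X μ + (∫ ω, X ω ∂μ - t) ^ 2 := by
    have h := variance_eq_sub (X := fun ω => X ω - t) (hX.sub (memLp_const t))
    rw [variance_sub_const hX.aestronglyMeasurable] at h
    rw [h, integral_sub (hX.integrable one_le_two) (integrable_const t)]
    simp
  rw [hvar, hvar, sub_self]
  ring

theorem integral_sub_sq_le [IsProbabilityMeasure μ] {X : Ω → ℝ} (hX : MemLp X 2 μ) {a b σ t : ℝ}
    (hm : ∫ ω, X ω ∂μ ∈ Set.Icc a b) (ht : t ∈ Set.Icc a b)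
    (hσ : ∫ ω, (X ω - ∫ ω', X ω' ∂μ) ^ 2 ∂μ ≤ σ) : ∫ ω, (X ω - t) ^ 2 ∂μ ≤ σ + (b - a) ^ 2 := by
  rw [integral_sub_sq_eq_add hX]
  nlinarith [hm.1, hm.2, ht.1, ht.2]

end MeasureTheory

/-- Independence under `𝔼` only applies to bounded test functions, hence the truncation at `M`. -/
noncomputable def truncPosSq (M s : ℝ) : ℝ := min (max s 0 ^ 2) M

section TruncPosSq

variable {M : ℝ}

theorem continuous_truncPosSq (M : ℝ) : Continuous (truncPosSq M) := by
  unfold truncPosSq; fun_prop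

theorem truncPosSq_nonneg (hM : 0 ≤ M) (s : ℝ) : 0 ≤ truncPosSq M s :=
  le_min (sq_nonneg _) hM

theorem abs_truncPosSq_le (hM : 0 ≤ M) (s : ℝ) : |truncPosSq M s| ≤ M := by
  rw [abs_of_nonneg (truncPosSq_nonneg hM s)]
  exact min_le_right _ _

theorem truncPosSq_zero (hM : 0 ≤ M) : truncPosSq M 0 = 0 := by
  simp [truncPosSq, hM]

theorem max_add_zero_sq_le (s δ : ℝ) :
    max (s + δ) 0 ^ 2 ≤ max s 0 ^ 2 + 2 * max s 0 * δ + δ ^ 2 := by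
  rcases le_or_gt s 0 with hs | hs <;> rcases le_or_gt (s + δ) 0 with hsδ | hsδ <;>
    simp only [hs, hsδ, le_of_lt, max_eq_left, max_eq_right] <;> nlinarith

variable {Ω : Type*} [MeasurableSpace Ω] {μ : Measure Ω}

theorem integrable_truncPosSq [IsFiniteMeasure μ] (hM : 0 ≤ M) {f : Ω → ℝ}
    (hf : AEStronglyMeasurable f μ) : Integrable (fun ω => truncPosSq M (f ω)) μ :=
  .of_bound ((continuous_truncPosSq M).comp_aestronglyMeasurable hf) M
    (ae_of_all _ fun _ => abs_truncPosSq_le hM _)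

theorem integral_truncPosSq_le [IsProbabilityMeasure μ] (hM : 0 ≤ M) (f : Ω → ℝ) :
    ∫ ω, truncPosSq M (f ω) ∂μ ≤ M := by
  simpa using integral_mono_of_nonneg (ae_of_all _ fun ω => truncPosSq_nonneg hM (f ω))
    (integrable_const (μ := μ) M) (ae_of_all _ fun _ => min_le_right _ _)

theorem integral_truncPosSq_add_le [IsProbabilityMeasure μ] (hM : 0 ≤ M) {Z : Ω → ℝ} {c : ℝ}
    (hZ : MemLp Z 2 μ) (hmean : ∫ ω, Z ω ∂μ ≤ 0) (hsq : ∫ ω, Z ω ^ 2 ∂μ ≤ c) (s : ℝ) :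
    ∫ ω, truncPosSq M (s + Z ω) ∂μ ≤ truncPosSq M s + c := by
  have hc : 0 ≤ c := (integral_nonneg fun ω => sq_nonneg (Z ω)).trans hsq
  by_cases hs : max s 0 ^ 2 ≤ M
  · have hZint : Integrable Z μ := hZ.integrable one_le_two
    have hquad : Integrable (fun ω => max s 0 ^ 2 + 2 * max s 0 * Z ω) μ :=
      (integrable_const _).add (hZint.const_mul _)
    calc ∫ ω, truncPosSq M (s + Z ω) ∂μ
        ≤ ∫ ω, (max s 0 ^ 2 + 2 * max s 0 * Z ω + Z ω ^ 2) ∂μ :=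
          integral_mono_of_nonneg (ae_of_all _ fun ω => truncPosSq_nonneg hM _)
            (hquad.add hZ.integrable_sq)
            (ae_of_all _ fun ω => (min_le_left _ _).trans (max_add_zero_sq_le s (Z ω)))
      _ = max s 0 ^ 2 + 2 * max s 0 * ∫ ω, Z ω ∂μ + ∫ ω, Z ω ^ 2 ∂μ := by
          rw [integral_add hquad hZ.integrable_sq, integral_add (integrable_const _)
            (hZint.const_mul _), integral_const_mul, integral_const]
          simp
      _ ≤ max s 0 ^ 2 + c := by nlinarith [le_max_right s 0]
      _ = truncPosSq M s + c := by rw [truncPosSq, min_eq_left hs]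
  · rw [truncPosSq, min_eq_right (not_le.1 hs).le]
    linarith [integral_truncPosSq_le hM (fun ω => s + Z ω) (μ := μ)]

end TruncPosSq

section SublinearExpectation

variable {Ω Θ : Type*} [MeasurableSpace Ω] {P : Θ → Measure Ω}

theorem integral_le_SE {f : Ω → ℝ} (hf : BddAbove (Set.range fun θ => ∫ ω, f ω ∂P θ)) (θ : Θ) :
    ∫ ω, f ω ∂P θ ≤ SE P f :=
  le_ciSup hf θ

theorem SE_le [Nonempty Θ] {f : Ω → ℝ} {c : ℝ} (h : ∀ θ, ∫ ω, f ω ∂P θ ≤ c) : SE P f ≤ c :=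
  ciSup_le h

theorem SE_nonneg {f : Ω → ℝ} (hf : ∀ ω, 0 ≤ f ω) : 0 ≤ SE P f :=
  Real.iSup_nonneg fun _ => integral_nonneg hf

theorem integral_truncPosSq_le_SE [∀ θ, IsProbabilityMeasure (P θ)] {M : ℝ} (hM : 0 ≤ M)
    (f : Ω → ℝ) (θ : Θ) :
    ∫ ω, truncPosSq M (f ω) ∂P θ ≤ SE P (fun ω => truncPosSq M (f ω)) :=
  integral_le_SE ⟨M, by rintro _ ⟨θ', rfl⟩; exact integral_truncPosSq_le hM f⟩ θ

theorem bddAbove_integral_of_bddAbove_integral_sq [∀ θ, IsProbabilityMeasure (P θ)] {X : Ω → ℝ}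
    (hX : ∀ θ, MemLp X 2 (P θ)) (h : BddAbove (Set.range fun θ => ∫ ω, X ω ^ 2 ∂P θ)) :
    BddAbove (Set.range fun θ => ∫ ω, X ω ∂P θ) ∧
      BddAbove (Set.range fun θ => ∫ ω, (X ω - ∫ ω', X ω' ∂P θ) ^ 2 ∂P θ) := by
  obtain ⟨B, hB⟩ := h
  have hsplit (θ : Θ) := integral_sub_sq_eq_add (hX θ) 0
  have hvar (θ : Θ) : 0 ≤ ∫ ω, (X ω - ∫ ω', X ω' ∂P θ) ^ 2 ∂P θ :=
    integral_nonneg fun ω => sq_nonneg _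
  have hB' (θ : Θ) : ∫ ω, X ω ^ 2 ∂P θ ≤ B := hB ⟨θ, rfl⟩
  simp only [sub_zero] at hsplit
  refine ⟨⟨(1 + B) / 2, ?_⟩, ⟨B, ?_⟩⟩ <;> rintro _ ⟨θ, rfl⟩
  · nlinarith [hsplit θ, hvar θ, hB' θ, sq_nonneg (∫ ω, X ω ∂P θ - 1)]
  · nlinarith [hsplit θ, hB' θ, sq_nonneg (∫ ω, X ω ∂P θ)]

theorem integral_mem_Icc_SE [∀ θ, IsProbabilityMeasure (P θ)] {X : Ω → ℝ}
    (hX : ∀ θ, MemLp X 2 (P θ)) (h : BddAbove (Set.range fun θ => ∫ ω, X ω ^ 2 ∂P θ)) (θ : Θ) :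
    ∫ ω, X ω ∂P θ ∈ Set.Icc (-SE P (fun ω => -X ω)) (SE P X) := by
  have hneg := integral_le_SE (bddAbove_integral_of_bddAbove_integral_sq (X := fun ω => -X ω)
    (fun θ => (hX θ).neg) (by simpa using h)).1 θ
  rw [integral_neg] at hneg
  exact ⟨by linarith, integral_le_SE (bddAbove_integral_of_bddAbove_integral_sq hX h).1 θ⟩

theorem SE_le_card_mul_of_le_sum [Nonempty Θ] {ι : Type*} {s : Finset ι} {G : Ω → ℝ}
    {F : ι → Ω → ℝ} (hG : ∀ ω, 0 ≤ G ω) (hGF : ∀ ω, G ω ≤ ∑ j ∈ s, F j ω)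
    (hF : ∀ θ, ∀ j ∈ s, Integrable (F j) (P θ)) {B : ℝ}
    (hB : ∀ θ, ∀ j ∈ s, ∫ ω, F j ω ∂P θ ≤ B) : SE P G ≤ s.card * B :=
  SE_le fun θ => calc
    ∫ ω, G ω ∂P θ ≤ ∫ ω, ∑ j ∈ s, F j ω ∂P θ :=
      integral_mono_of_nonneg (ae_of_all _ hG) (integrable_finsetSum _ (hF θ)) (ae_of_all _ hGF)
    _ = ∑ j ∈ s, ∫ ω, F j ω ∂P θ := integral_finsetSum _ (hF θ)
    _ ≤ s.card * B := by simpa using sum_le_sum (hB θ)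

theorem SEIdentDistrib.comp {X Y : Ω → ℝ} (hXY : SEIdentDistrib P X Y) {h : ℝ → ℝ}
    (hh : Continuous h) : SEIdentDistrib P (fun ω => h (X ω)) (fun ω => h (Y ω)) :=
  fun φ hφ ⟨C, hC⟩ => hXY (φ ∘ h) (hφ.comp hh) ⟨C, fun x => hC (h x)⟩

theorem SEIndepOf.comp {m m' : ℕ} {Y : Ω → ℝ} {V : Ω → Fin m → ℝ} (hYV : SEIndepOf P Y V)
    {h : ℝ → ℝ} (hh : Continuous h) {F : (Fin m → ℝ) → Fin m' → ℝ} (hF : Continuous F) :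
    SEIndepOf P (fun ω => h (Y ω)) (fun ω => F (V ω)) :=
  fun φ hφ ⟨C, hC⟩ => hYV (fun x y => φ (F x) (h y))
    (hφ.comp ((hF.comp continuous_fst).prodMk (hh.comp continuous_snd))) ⟨C, fun _ _ => hC _ _⟩

def SEIIDUpTo (P : Θ → Measure Ω) (X : ℕ → Ω → ℝ) (N : ℕ) : Prop :=
  ∀ i : ℕ, i + 1 < N →
    SEIdentDistrib P (X (i + 1)) (X 0) ∧ SEIndepOf P (X (i + 1)) (fun ω (j : Fin (i + 1)) => X j ω)

theorem SEIIDUpTo.comp {X : ℕ → Ω → ℝ} {N : ℕ} (hX : SEIIDUpTo P X N) {h : ℝ → ℝ}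
    (hh : Continuous h) : SEIIDUpTo P (fun i ω => h (X i ω)) N :=
  fun i hi => ⟨(hX i hi).1.comp hh, (hX i hi).2.comp hh (F := fun x j => h (x j)) (by fun_prop)⟩

theorem SE_truncPosSq_add_le_of_indep [Nonempty Θ] [∀ θ, IsProbabilityMeasure (P θ)] {M : ℝ}
    (hM : 0 ≤ M) {m : ℕ} {Y : Ω → ℝ} {V : Ω → Fin m → ℝ} (hYV : SEIndepOf P Y V)
    {g : (Fin m → ℝ) → ℝ} (hg : Continuous g)
    (hgV : ∀ θ, AEStronglyMeasurable (fun ω => g (V ω)) (P θ)) {c : ℝ}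
    (hstep : ∀ s, SE P (fun ω => truncPosSq M (s + Y ω)) ≤ truncPosSq M s + c) :
    SE P (fun ω => truncPosSq M (g (V ω) + Y ω)) ≤ SE P (fun ω => truncPosSq M (g (V ω))) + c := by
  rw [hYV (fun x y => truncPosSq M (g x + y)) (by have := continuous_truncPosSq M; fun_prop)
    ⟨M, fun _ _ => abs_truncPosSq_le hM _⟩]
  refine SE_le fun θ => ?_
  have hint := integrable_truncPosSq hM (hgV θ)
  calc ∫ ω, SE P (fun ω' => truncPosSq M (g (V ω) + Y ω')) ∂P θ
      ≤ ∫ ω, (truncPosSq M (g (V ω)) + c) ∂P θ :=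
        integral_mono_of_nonneg (ae_of_all _ fun _ => SE_nonneg fun _ => truncPosSq_nonneg hM _)
          (hint.add (integrable_const c)) (ae_of_all _ fun ω => hstep _)
    _ = ∫ ω, truncPosSq M (g (V ω)) ∂P θ + c := by
        rw [integral_add hint (integrable_const c), integral_const]; simp
    _ ≤ SE P (fun ω => truncPosSq M (g (V ω))) + c :=
        add_le_add_left (integral_truncPosSq_le_SE hM _ θ) c

end SublinearExpectation

theorem max_sup'_sub_zero_sq_le_sum {ι : Type*} {s : Finset ι} (hs : s.Nonempty) (f : ι → ℝ)
    (c : ℝ) : max (s.sup' hs f - c) 0 ^ 2 ≤ ∑ j ∈ s, max (f j - c) 0 ^ 2 := by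
  obtain ⟨j, hj, hsup⟩ := s.exists_mem_eq_sup' hs f
  rw [hsup]
  exact single_le_sum (f := fun j => max (f j - c) 0 ^ 2) (fun _ _ => sq_nonneg _) hj

theorem max_neg_inf'_sub_zero_sq_le_sum {ι : Type*} {s : Finset ι} (hs : s.Nonempty)
    (f : ι → ℝ) (c : ℝ) : max (-(s.inf' hs f - c)) 0 ^ 2 ≤ ∑ j ∈ s, max (-(f j - c)) 0 ^ 2 := by
  obtain ⟨j, hj, hinf⟩ := s.exists_mem_eq_inf' hs f
  rw [hinf]
  exact single_le_sum (f := fun j => max (-(f j - c)) 0 ^ 2) (fun _ _ => sq_nonneg _) hj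

section Rows

variable {Ω Θ : Type*} [MeasurableSpace Ω] {P : Θ → Measure Ω} [Nonempty Θ]
  [∀ θ, IsProbabilityMeasure (P θ)] {ξ : ℕ → Ω → ℝ} {N : ℕ} {D : ℝ}

theorem SE_truncPosSq_sum_le (hiid : SEIIDUpTo P ξ N) (hξ : ∀ θ i, MemLp (ξ i) 2 (P θ))
    (hmean : ∀ θ, ∫ ω, ξ 0 ω ∂P θ ≤ 0) (hsq : ∀ θ, ∫ ω, ξ 0 ω ^ 2 ∂P θ ≤ D) {M : ℝ}
    (hM : 0 ≤ M) {b m : ℕ} (hbm : b + m ≤ N) :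
    SE P (fun ω => truncPosSq M (∑ i ∈ range m, ξ (b + i) ω)) ≤ m * D := by
  have hstep₀ (s : ℝ) : SE P (fun ω => truncPosSq M (s + ξ 0 ω)) ≤ truncPosSq M s + D :=
    SE_le fun θ => integral_truncPosSq_add_le hM (hξ θ 0) (hmean θ) (hsq θ) s
  induction m with
  | zero => simp [truncPosSq_zero hM, SE]
  | succ m ih =>
    obtain ⟨hb, hm⟩ | ⟨i, hi⟩ : (b = 0 ∧ m = 0) ∨ ∃ i, b + m = i + 1 := by
      rcases Nat.eq_zero_or_pos (b + m) with h | h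
      · exact .inl (by omega)
      · exact .inr ⟨b + m - 1, by omega⟩
    · subst hb hm
      simpa [truncPosSq_zero hM] using hstep₀ 0
    have hind := (hiid i (by omega)).2
    let g : (Fin (i + 1) → ℝ) → ℝ := fun x => ∑ l : Fin m, x ⟨b + l, by omega⟩
    have hg_eq (ω : Ω) : g (fun j => ξ j ω) = ∑ l ∈ range m, ξ (b + l) ω :=
      Fin.sum_univ_eq_sum_range (fun l => ξ (b + l) ω) m
    have hstep (s : ℝ) : SE P (fun ω => truncPosSq M (s + ξ (i + 1) ω)) ≤ truncPosSq M s + D := by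
      rw [(hiid i (by omega)).1 (fun y => truncPosSq M (s + y))
        (by have := continuous_truncPosSq M; fun_prop) ⟨M, fun _ => abs_truncPosSq_le hM _⟩]
      exact hstep₀ s
    calc SE P (fun ω => truncPosSq M (∑ l ∈ range (m + 1), ξ (b + l) ω))
        = SE P (fun ω => truncPosSq M (g (fun j => ξ j ω) + ξ (i + 1) ω)) := by
          simp only [hg_eq, sum_range_succ, hi]
      _ ≤ SE P (fun ω => truncPosSq M (g (fun j => ξ j ω))) + D :=
          SE_truncPosSq_add_le_of_indep hM hind (by fun_prop)
            (fun θ => by simp only [hg_eq]; exact (memLp_finsetSum _ fun l _ => hξ θ _).1) hstep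
      _ ≤ m * D + D := by simpa only [hg_eq] using add_le_add_left (ih (by omega)) D
      _ = (m + 1 : ℕ) * D := by push_cast; ring

theorem integral_sq_max_sum_zero_le (hiid : SEIIDUpTo P ξ N) (hξ : ∀ θ i, MemLp (ξ i) 2 (P θ))
    (hmean : ∀ θ, ∫ ω, ξ 0 ω ∂P θ ≤ 0) (hsq : ∀ θ, ∫ ω, ξ 0 ω ^ 2 ∂P θ ≤ D) {b m : ℕ}
    (hbm : b + m ≤ N) (θ : Θ) :
    ∫ ω, max (∑ i ∈ range m, ξ (b + i) ω) 0 ^ 2 ∂P θ ≤ m * D :=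
  integral_le_of_forall_integral_min_le
    (integrable_sq_max_zero (memLp_finsetSum _ fun i _ => hξ θ (b + i))) fun M =>
      (integral_truncPosSq_le_SE M.cast_nonneg _ θ).trans
        (SE_truncPosSq_sum_le hiid hξ hmean hsq M.cast_nonneg hbm)

end Rows

section RowAverages

variable {Ω Θ : Type*} [MeasurableSpace Ω] {P : Θ → Measure Ω} [∀ θ, IsProbabilityMeasure (P θ)]
  {X : ℕ → Ω → ℝ}

theorem integrable_sq_max_rowAverage_zero (hX : ∀ θ i, MemLp (X i) 2 (P θ)) (ε c : ℝ) (n j : ℕ)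
    (θ : Θ) :
    Integrable (fun ω => max (ε * ((∑ i ∈ range n, X (j * n + i) ω) / n - c)) 0 ^ 2) (P θ) := by
  refine integrable_sq_max_zero ?_
  simpa only [div_eq_mul_inv, Pi.sub_apply] using
    (((memLp_finsetSum _ fun i _ => hX θ (j * n + i)).mul_const (n : ℝ)⁻¹).sub
      (memLp_const c)).const_mul ε

theorem integral_sq_max_rowAverage_zero_le [Nonempty Θ] {N : ℕ} (hiid : SEIIDUpTo P X N)
    (hX : ∀ θ i, MemLp (X i) 2 (P θ)) {ε c D : ℝ} (hmean : ∀ θ, ε * (∫ ω, X 0 ω ∂P θ - c) ≤ 0)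
    (hsq : ∀ θ, ∫ ω, (ε * (X 0 ω - c)) ^ 2 ∂P θ ≤ D) {n j : ℕ} (hn : 0 < n) (hj : j * n + n ≤ N)
    (θ : Θ) :
    ∫ ω, max (ε * ((∑ i ∈ range n, X (j * n + i) ω) / n - c)) 0 ^ 2 ∂P θ ≤ D / n := by
  have hn' : (n : ℝ) ≠ 0 := Nat.cast_ne_zero.2 hn.ne'
  have key := integral_sq_max_sum_zero_le (ξ := fun i ω => ε * (X i ω - c) / n) (D := D / n ^ 2)
    (hiid.comp (h := fun x => ε * (x - c) / n) (by fun_prop))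
    (fun θ i => by
      simpa only [div_eq_mul_inv, Pi.sub_apply] using
        (((hX θ i).sub (memLp_const c)).const_mul ε).mul_const (n : ℝ)⁻¹)
    (fun θ => by
      rw [integral_div, integral_const_mul, integral_sub (hX θ 0 |>.integrable one_le_two)
        (integrable_const c), integral_const]
      simpa using div_nonpos_of_nonpos_of_nonneg (hmean θ) (Nat.cast_nonneg n))
    (fun θ => by
      simp_rw [div_pow]
      rw [integral_div]
      gcongr
      exact hsq θ)
    hj θ
  have hsum (ω : Ω) : ∑ i ∈ range n, ε * (X (j * n + i) ω - c) / n
      = ε * ((∑ i ∈ range n, X (j * n + i) ω) / n - c) := by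
    rw [← sum_div, ← mul_sum, sum_sub_distrib, sum_const, card_range, nsmul_eq_mul]
    field_simp
  calc _ = _ := by simp only [hsum]
    _ ≤ n * (D / n ^ 2) := key
    _ = D / n := by field_simp

theorem SE_le_of_le_sum_sq_max_rowAverage [Nonempty Θ] {N : ℕ} (hiid : SEIIDUpTo P X N)
    (hX : ∀ θ i, MemLp (X i) 2 (P θ)) {ε c D : ℝ} (hmean : ∀ θ, ε * (∫ ω, X 0 ω ∂P θ - c) ≤ 0)
    (hsq : ∀ θ, ∫ ω, (ε * (X 0 ω - c)) ^ 2 ∂P θ ≤ D) {n k : ℕ} (hn : 0 < n) (hnk : n * k ≤ N)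
    {G : Ω → ℝ} (hG₀ : ∀ ω, 0 ≤ G ω)
    (hG : ∀ ω, G ω ≤ ∑ j ∈ range k, max (ε * ((∑ i ∈ range n, X (j * n + i) ω) / n - c)) 0 ^ 2) :
    SE P G ≤ k * (D / n) := by
  have hrow (j : ℕ) (hj : j ∈ range k) : j * n + n ≤ N :=
    calc j * n + n = (j + 1) * n := by ring
      _ ≤ k * n := Nat.mul_le_mul_right n (mem_range.1 hj)
      _ ≤ N := by rwa [mul_comm]
  simpa using SE_le_card_mul_of_le_sum hG₀ hG
    (fun θ j _ => integrable_sq_max_rowAverage_zero hX ε c n j θ)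
    fun θ j hj => integral_sq_max_rowAverage_zero_le hiid hX hmean hsq hn (hrow j hj) θ

end RowAverages

/-- Concentration of the max/min row-average estimators of the upper and lower means:
`𝔼[((μ̂̄ − μ̄)⁺)²] ≤ Ck/n` and `𝔼[((μ̂_ − μ_)⁻)²] ≤ Ck/n` with `C = 2(σ̄² + (μ̄ − μ_)²)`. -/
theorem stmt3 {Ω Θ : Type*} [MeasurableSpace Ω] [Nonempty Θ]
    (P : Θ → Measure Ω) (hP : ∀ θ, IsProbabilityMeasure (P θ))
    (N n k : ℕ) (hn : 0 < n) (hk : 0 < k) (hN : N = n * k)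
    (X : ℕ → Ω → ℝ)
    (hiid : ∀ i : ℕ, i + 1 < N →
      SEIdentDistrib P (X (i + 1)) (X 0) ∧
      SEIndepOf P (X (i + 1)) (fun ω (j : Fin (i + 1)) => X (j : ℕ) ω))
    (hInt : ∀ θ i, Integrable (X i) (P θ))
    (hInt2 : ∀ θ i, Integrable (fun ω => (X i ω) ^ 2) (P θ))
    (hBdd2 : BddAbove (Set.range fun θ => ∫ ω, (X 0 ω) ^ 2 ∂(P θ)))
    (μbar μlow σbarSq C : ℝ)
    (hμbar : μbar = SE P (X 0))
    (hμlow : μlow = -SE P (fun ω => -X 0 ω))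
    (hσbarSq : σbarSq = ⨆ θ, ∫ ω, (X 0 ω - ∫ ω', X 0 ω' ∂(P θ)) ^ 2 ∂(P θ))
    (hC : C = 2 * (σbarSq + (μbar - μlow) ^ 2)) :
    SE P (fun ω =>
        (max ((Finset.range k).sup' (Finset.nonempty_range_iff.mpr hk.ne')
            (fun j => (∑ i ∈ Finset.range n, X (j * n + i) ω) / n) - μbar) 0) ^ 2)
      ≤ C * k / n ∧
    SE P (fun ω =>
        (max (-((Finset.range k).inf' (Finset.nonempty_range_iff.mpr hk.ne')
            (fun j => (∑ i ∈ Finset.range n, X (j * n + i) ω) / n) - μlow)) 0) ^ 2)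
      ≤ C * k / n := by
  have hX (θ : Θ) (i : ℕ) : MemLp (X i) 2 (P θ) :=
    (memLp_two_iff_integrable_sq (hInt θ i).aestronglyMeasurable).2 (hInt2 θ i)
  have hmean (θ : Θ) : ∫ ω, X 0 ω ∂P θ ∈ Set.Icc μlow μbar :=
    hμbar ▸ hμlow ▸ integral_mem_Icc_SE (hX · 0) hBdd2 θ
  have hμ : μlow ≤ μbar := (hmean (Classical.arbitrary Θ)).1.trans (hmean _).2
  have hsq (θ : Θ) (t : ℝ) (ht : t ∈ Set.Icc μlow μbar) :
      ∫ ω, (X 0 ω - t) ^ 2 ∂P θ ≤ σbarSq + (μbar - μlow) ^ 2 :=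
    integral_sub_sq_le (hX θ 0) (hmean θ) ht
      (hσbarSq ▸ le_ciSup (bddAbove_integral_of_bddAbove_integral_sq (hX · 0) hBdd2).2 θ)
  have hσ : 0 ≤ σbarSq := hσbarSq ▸ Real.iSup_nonneg fun θ => integral_nonneg fun ω => sq_nonneg _
  have hkC : k * ((σbarSq + (μbar - μlow) ^ 2) / n) ≤ C * k / n := by
    rw [hC, mul_div_assoc', div_le_div_iff_of_pos_right (Nat.cast_pos.2 hn)]
    nlinarith [hσ, sq_nonneg (μbar - μlow), k.cast_nonneg (α := ℝ)]
  refine ⟨(SE_le_of_le_sum_sq_max_rowAverage hiid hX (ε := 1) (c := μbar)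
      (fun θ => by linarith [(hmean θ).2])
      (fun θ => by simpa only [one_mul] using hsq θ μbar ⟨hμ, le_rfl⟩) hn hN.ge
      (fun _ => sq_nonneg _) fun _ => by simpa using max_sup'_sub_zero_sq_le_sum _ _ _).trans hkC,
    (SE_le_of_le_sum_sq_max_rowAverage hiid hX (ε := -1) (c := μlow)
      (fun θ => by linarith [(hmean θ).1])
      (fun θ => by simpa only [neg_one_mul, neg_sq] using hsq θ μlow ⟨le_rfl, hμ⟩) hn hN.ge
      (fun _ => sq_nonneg _) fun _ => by
        simpa using max_neg_inf'_sub_zero_sq_le_sum _ _ _).trans hkC⟩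
end

section
/- Let h : ℝ → ℝ be continuously differentiable with bounded derivative and let Z be a standard Gaussian random variable with (classical) expectation E. Define g(s) := e^{s²/2} ∫_{−∞}^s e^{−y²/2} (h(y) − E[h(Z)]) dy for s ∈ ℝ. Then E[g(Z)] = −E[h'(Z)]. -/
/-!
Write `φ(y) = exp(-y²/2)` and `f = φ · (h - E[h(Z)])`, so that `∫ f = 0` and
`E[g(Z)] = (2π)^{-1/2} ∫ F` with `F(z) = ∫_{y ≤ z} f(y) dy`. Because `∫ f = 0`,
`F(z) = ∫ (1{y ≤ z} - 1{0 ≤ z}) f(y) dy`, and the kernel integrates to `-y` in `z`; by Fubini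
`∫ F = -∫ y f(y) dy`. Gaussian integration by parts (`φ' = -y φ`) turns `∫ y f(y) dy` into
`∫ φ h' = √(2π) E[h'(Z)]`.
-/

open MeasureTheory Set Real ProbabilityTheory

lemma indicator_Ici_sub_indicator_Ici_of_le {a b : ℝ} (hab : a ≤ b) :
    (fun z => (Ici a).indicator (1 : ℝ → ℝ) z - (Ici b).indicator 1 z) =
      (Ico a b).indicator 1 := by
  rw [← Ici_sdiff_Ici, indicator_sdiff (Ici_subset_Ici.2 hab)]
  rfl

lemma integrable_indicator_Ici_sub_indicator_Ici (a b : ℝ) :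
    Integrable fun z => (Ici a).indicator (1 : ℝ → ℝ) z - (Ici b).indicator 1 z := by
  wlog hab : a ≤ b generalizing a b
  · simpa only [Pi.neg_def, neg_sub] using (this b a (le_of_not_ge hab)).neg
  rw [indicator_Ici_sub_indicator_Ici_of_le hab, integrable_indicator_iff measurableSet_Ico]
  exact integrableOn_const measure_Ico_lt_top.ne

lemma integral_indicator_Ici_sub_indicator_Ici (a b : ℝ) :
    ∫ z, ((Ici a).indicator (1 : ℝ → ℝ) z - (Ici b).indicator 1 z) = b - a := by
  wlog hab : a ≤ b generalizing a b
  · rw [← neg_sub a b, ← this b a (le_of_not_ge hab), ← integral_neg]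
    simp only [neg_sub]
  rw [indicator_Ici_sub_indicator_Ici_of_le hab, integral_indicator_one measurableSet_Ico,
    Real.volume_real_Ico_of_le hab]

lemma integral_abs_indicator_Ici_sub_indicator_Ici (a b : ℝ) :
    ∫ z, |(Ici a).indicator (1 : ℝ → ℝ) z - (Ici b).indicator 1 z| = |b - a| := by
  wlog hab : a ≤ b generalizing a b
  · simpa only [abs_sub_comm] using this b a (le_of_not_ge hab)
  simp_rw [congrFun (indicator_Ici_sub_indicator_Ici_of_le hab),
    abs_of_nonneg (sub_nonneg.2 hab)]
  simp [← Real.norm_eq_abs, norm_indicator_eq_indicator_norm, hab]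

theorem integral_setIntegral_Iic_eq_neg_integral_mul {f : ℝ → ℝ} (hf : Integrable f)
    (hyf : Integrable fun y => y * f y) (hf0 : ∫ y, f y = 0) :
    ∫ z, ∫ y in Iic z, f y = -∫ y, y * f y := by
  set k : ℝ → ℝ → ℝ := fun z y => ((Ici y).indicator 1 z - (Ici 0).indicator 1 z) * f y
  have hk_meas : AEStronglyMeasurable (Function.uncurry k) (volume.prod volume) := by
    have h_ind : Measurable fun p : ℝ × ℝ => (Ici p.2).indicator (1 : ℝ → ℝ) p.1 := by
      simp only [indicator_apply, mem_Ici, Pi.one_apply]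
      exact Measurable.ite (measurableSet_le measurable_snd measurable_fst) measurable_const
        measurable_const
    have h_ind₀ : Measurable fun p : ℝ × ℝ => (Ici 0).indicator (1 : ℝ → ℝ) p.1 :=
      (measurable_const.indicator measurableSet_Ici).comp measurable_fst
    exact (h_ind.sub h_ind₀).aestronglyMeasurable.mul hf.aestronglyMeasurable.comp_snd
  have hk : Integrable (Function.uncurry k) (volume.prod volume) := by
    refine (integrable_prod_iff' hk_meas).2
      ⟨ae_of_all _ fun y =>
        (integrable_indicator_Ici_sub_indicator_Ici y 0).mul_const (f y), ?_⟩
    simpa [k, abs_mul, integral_mul_const, integral_abs_indicator_Ici_sub_indicator_Ici]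
      using hyf.norm
  have inner_y (z : ℝ) : ∫ y, k z y = ∫ y in Iic z, f y := by
    have h_ind (y : ℝ) : (Ici y).indicator 1 z * f y = (Iic z).indicator f y := by
      by_cases hy : y ≤ z <;> simp [hy]
    simp_rw [k, sub_mul, h_ind]
    rw [integral_sub (hf.indicator measurableSet_Iic) (hf.const_mul _),
      integral_indicator measurableSet_Iic, integral_const_mul, hf0, mul_zero, sub_zero]
  have inner_z (y : ℝ) : ∫ z, k z y = -(y * f y) := by
    rw [integral_mul_const, integral_indicator_Ici_sub_indicator_Ici, zero_sub, neg_mul]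
  calc ∫ z, ∫ y in Iic z, f y = ∫ z, ∫ y, k z y := by simp_rw [inner_y]
    _ = ∫ y, ∫ z, k z y := integral_integral_swap hk
    _ = -∫ y, y * f y := by simp_rw [inner_z, integral_neg]

lemma integral_gaussianReal_zero_one (f : ℝ → ℝ) :
    ∫ z, f z ∂gaussianReal 0 1 = (√(2 * π))⁻¹ * ∫ z, rexp (-z ^ 2 / 2) * f z := by
  rw [integral_gaussianReal_eq_integral_smul one_ne_zero, ← integral_const_mul]
  congr 1 with z
  simp [gaussianPDFReal, mul_assoc]

lemma integrable_one_add_sq_mul_exp_neg_sq_div_two :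
    Integrable fun y : ℝ => (1 + y ^ 2) * rexp (-y ^ 2 / 2) := by
  have h0 := integrable_exp_neg_mul_sq (b := 1 / 2) (by norm_num)
  have h2 := integrable_rpow_mul_exp_neg_mul_sq (b := 1 / 2) (by norm_num) (s := 2) (by norm_num)
  refine (h0.add h2).congr (ae_of_all _ fun y => ?_)
  simp only [Pi.add_apply, rpow_two]
  ring_nf

lemma integrable_exp_neg_sq_div_two_mul {w : ℝ → ℝ} (hw : AEStronglyMeasurable w) {K : ℝ}
    (hK : ∀ y, |w y| ≤ K * (1 + y ^ 2)) : Integrable fun y => rexp (-y ^ 2 / 2) * w y := by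
  refine (integrable_one_add_sq_mul_exp_neg_sq_div_two.const_mul K).mono'
    ((by fun_prop : Continuous fun y : ℝ => rexp (-y ^ 2 / 2)).aestronglyMeasurable.mul hw)
    (ae_of_all _ fun y => ?_)
  rw [norm_mul, norm_of_nonneg (exp_pos _).le, norm_eq_abs, ← mul_assoc, mul_comm]
  exact mul_le_mul_of_nonneg_right (hK y) (exp_pos _).le

lemma integral_exp_neg_sq_div_two : ∫ y, rexp (-y ^ 2 / 2) = √(2 * π) := by
  have h := integral_gaussianReal_zero_one fun _ => 1
  simp only [integral_const, probReal_univ, smul_eq_mul, mul_one] at h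
  rw [← (eq_inv_mul_iff_mul_eq₀ (by positivity)).1 h, mul_one]

lemma integral_exp_neg_sq_div_two_mul_sub_integral_gaussianReal {h : ℝ → ℝ}
    (hh : Integrable fun y => rexp (-y ^ 2 / 2) * h y) :
    ∫ y, rexp (-y ^ 2 / 2) * (h y - ∫ z, h z ∂gaussianReal 0 1) = 0 := by
  set m := ∫ z, h z ∂gaussianReal 0 1
  have hφm : Integrable fun y => rexp (-y ^ 2 / 2) * m :=
    integrable_exp_neg_sq_div_two_mul aestronglyMeasurable_const (K := |m|)
      fun y => by nlinarith [sq_nonneg y, abs_nonneg m]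
  have h_mean : ∫ y, rexp (-y ^ 2 / 2) * h y = √(2 * π) * m :=
    ((eq_inv_mul_iff_mul_eq₀ (by positivity)).1 (integral_gaussianReal_zero_one h)).symm
  simp_rw [mul_sub]
  rw [integral_sub hh hφm, integral_mul_const, integral_exp_neg_sq_div_two, h_mean, sub_self]

lemma abs_le_mul_abs_add_abs_of_abs_deriv_le {v : ℝ → ℝ} (hv : Differentiable ℝ v) {C : ℝ}
    (hC : ∀ y, |deriv v y| ≤ C) (y : ℝ) : |v y| ≤ C * |y| + |v 0| := by
  have := convex_univ.norm_image_sub_le_of_norm_deriv_le (fun x _ => hv x) (fun x _ => hC x)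
    (mem_univ 0) (mem_univ y)
  simp only [norm_eq_abs, sub_zero] at this
  linarith [abs_sub_abs_le_abs_sub (v y) (v 0)]

lemma integrable_exp_neg_sq_div_two_mul_of_abs_deriv_le {v : ℝ → ℝ}
    (hv : Differentiable ℝ v) {C : ℝ} (hC : ∀ y, |deriv v y| ≤ C) :
    Integrable fun y => rexp (-y ^ 2 / 2) * v y := by
  have hC0 : 0 ≤ C := (abs_nonneg _).trans (hC 0)
  refine integrable_exp_neg_sq_div_two_mul hv.continuous.aestronglyMeasurable
    (K := C + |v 0|) fun y => ?_
  have := abs_le_mul_abs_add_abs_of_abs_deriv_le hv hC y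
  nlinarith [abs_nonneg y, abs_nonneg (v 0), sq_abs y, sq_nonneg (|y| - 1)]

lemma integrable_mul_exp_neg_sq_div_two_mul_of_abs_deriv_le {v : ℝ → ℝ}
    (hv : Differentiable ℝ v) {C : ℝ} (hC : ∀ y, |deriv v y| ≤ C) :
    Integrable fun y => y * (rexp (-y ^ 2 / 2) * v y) := by
  have hC0 : 0 ≤ C := (abs_nonneg _).trans (hC 0)
  refine (integrable_exp_neg_sq_div_two_mul (w := fun y => y * v y)
    (continuous_id.mul hv.continuous).aestronglyMeasurable
    (K := C + |v 0|) fun y => ?_).congr (ae_of_all _ fun y => by ring)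
  have := abs_le_mul_abs_add_abs_of_abs_deriv_le hv hC y
  rw [abs_mul]
  nlinarith [abs_nonneg y, abs_nonneg (v 0), sq_abs y, sq_nonneg (|y| - 1)]

theorem integral_mul_exp_neg_sq_div_two_mul_eq_integral_deriv {v : ℝ → ℝ}
    (hv : Differentiable ℝ v) {C : ℝ} (hC : ∀ y, |deriv v y| ≤ C) :
    ∫ y, y * (rexp (-y ^ 2 / 2) * v y) = ∫ y, rexp (-y ^ 2 / 2) * deriv v y := by
  have hu (y : ℝ) : HasDerivAt (fun y => rexp (-y ^ 2 / 2)) (-y * rexp (-y ^ 2 / 2)) y := by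
    have h : HasDerivAt (fun y : ℝ => -y ^ 2 / 2) (-y) y :=
      (((hasDerivAt_id' y).fun_pow 2).fun_neg.div_const 2).congr_deriv (by simp; ring)
    simpa [mul_comm] using h.exp
  have hu'v : Integrable fun y => -y * rexp (-y ^ 2 / 2) * v y := by
    simpa only [Pi.neg_def, neg_mul, mul_assoc] using
      (integrable_mul_exp_neg_sq_div_two_mul_of_abs_deriv_le hv hC).neg
  have huv' : Integrable fun y => rexp (-y ^ 2 / 2) * deriv v y :=
    integrable_exp_neg_sq_div_two_mul (measurable_deriv v).aestronglyMeasurable (K := C)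
      fun y => by nlinarith [hC y, sq_nonneg y, (abs_nonneg _).trans (hC 0)]
  rw [integral_mul_deriv_eq_deriv_mul_of_integrable (fun y _ => hu y)
    (fun y _ => (hv y).hasDerivAt) huv' hu'v
    (integrable_exp_neg_sq_div_two_mul_of_abs_deriv_le hv hC), ← integral_neg]
  congr 1 with y
  ring

/-- For the bounded solution `g` of the Stein equation
`g'(s) − s g(s) = h(s) − E[h(Z)]`, one has `E[g(Z)] = −E[h'(Z)]`. -/
theorem stmt12 (h : ℝ → ℝ) (hh : ContDiff ℝ 1 h) (C : ℝ) (hbd : ∀ y, |deriv h y| ≤ C) :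
    let g : ℝ → ℝ := fun s =>
      Real.exp (s ^ 2 / 2) *
        ∫ y in Set.Iic s, Real.exp (-y ^ 2 / 2) *
          (h y - ∫ z, h z ∂(ProbabilityTheory.gaussianReal 0 1))
    (∫ z, g z ∂(ProbabilityTheory.gaussianReal 0 1)) =
      -∫ z, deriv h z ∂(ProbabilityTheory.gaussianReal 0 1) := by
  intro g
  set m := ∫ z, h z ∂gaussianReal 0 1
  have h_diff : Differentiable ℝ h := hh.differentiable one_ne_zero
  have hv : Differentiable ℝ fun y => h y - m := h_diff.sub_const m
  have hv_deriv : ∀ y, |deriv (fun y => h y - m) y| ≤ C := by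
    simpa only [deriv_sub_const] using hbd
  have hmean := integral_exp_neg_sq_div_two_mul_sub_integral_gaussianReal
    (integrable_exp_neg_sq_div_two_mul_of_abs_deriv_le h_diff hbd)
  calc ∫ z, g z ∂gaussianReal 0 1
      = (√(2 * π))⁻¹ * ∫ z, ∫ y in Iic z, rexp (-y ^ 2 / 2) * (h y - m) := by
        rw [integral_gaussianReal_zero_one]
        congr 2 with z
        rw [← mul_assoc, ← exp_add, neg_div, neg_add_cancel, exp_zero, one_mul]
    _ = (√(2 * π))⁻¹ * -∫ y, y * (rexp (-y ^ 2 / 2) * (h y - m)) := by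
        rw [integral_setIntegral_Iic_eq_neg_integral_mul
          (integrable_exp_neg_sq_div_two_mul_of_abs_deriv_le hv hv_deriv)
          (integrable_mul_exp_neg_sq_div_two_mul_of_abs_deriv_le hv hv_deriv) hmean]
    _ = -∫ z, deriv h z ∂gaussianReal 0 1 := by
        rw [integral_mul_exp_neg_sq_div_two_mul_eq_integral_deriv hv hv_deriv,
          integral_gaussianReal_zero_one, mul_neg]
        simp only [deriv_sub_const]
end
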